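/- Let F_1,…,F_Ñ be nonzero complex numbers, x_1,…,x_Ñ points, η a function satisfying (η(a−c)−η(b))(η(a+c)−η(b)) = (η(b−c)−η(a))(η(b+c)−η(a)) for all a,b,c, and γ a constant such that the denominators below are nonzero. Define for j ≠ k: M̃_{jk} = F_j / [(η(x_j−iγ) − η(x_k))·(η(x_j+iγ) − η(x_k))]. Then with g_j = √F_j (any fixed square roots), the matrix M_{jk} = (g_k/g_j) M̃_{jk} satisfies M_{jk} = M_{kj} for all j ≠ k. -/

import Mathlib

/-! The factor `g_k / g_j` turns the numerator `F_j = g_j²` into the symmetric `g_j g_k`, and the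
identity for `η` with `c = iγ` says that the denominator is symmetric under `j ↔ k`. -/

theorem div_mul_sq_eq_mul {G₀ : Type*} [GroupWithZero G₀] (a b : G₀) : a / b * b ^ 2 = a * b := by
  rcases eq_or_ne b 0 with rfl | hb
  · simp
  · rw [sq, ← mul_assoc, div_mul_cancel₀ a hb]

theorem symmetrized_matrix_offdiag_general (n : ℕ) (η : ℂ → ℂ)
    (hη : ∀ a b c : ℂ,
      (η (a - c) - η b) * (η (a + c) - η b) = (η (b - c) - η a) * (η (b + c) - η a))
    (γ : ℝ) (x F g : Fin n → ℂ) (hg : ∀ j, (g j) ^ 2 = F j) :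
    ∀ j k, j ≠ k →
      (g k / g j) * (F j /
          ((η (x j - Complex.I * γ) - η (x k)) * (η (x j + Complex.I * γ) - η (x k))))
        = (g j / g k) * (F k /
          ((η (x k - Complex.I * γ) - η (x j)) * (η (x k + Complex.I * γ) - η (x j)))) := by
  intro j k _
  rw [← hg j, ← hg k, ← mul_div_assoc, ← mul_div_assoc, div_mul_sq_eq_mul, div_mul_sq_eq_mul,
    mul_comm (g k), hη (x j) (x k)]

/-- Proposition 3.5: with g_j = √F_j, the matrix M_{jk} = (g_k/g_j)·M̃_{jk} is
symmetric off the diagonal, where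
M̃_{jk} = F_j / [(η(x_j−iγ)−η(x_k))·(η(x_j+iγ)−η(x_k))]. -/
theorem symmetrized_matrix_offdiag (n : ℕ) (η : ℂ → ℂ)
    (hη : ∀ a b c : ℂ,
      (η (a - c) - η b) * (η (a + c) - η b) = (η (b - c) - η a) * (η (b + c) - η a))
    (γ : ℝ) (x F g : Fin n → ℂ) (hF : ∀ j, F j ≠ 0) (hg : ∀ j, (g j) ^ 2 = F j)
    (hden : ∀ j k, j ≠ k →
      (η (x j - Complex.I * γ) - η (x k)) ≠ 0 ∧ (η (x j + Complex.I * γ) - η (x k)) ≠ 0) :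
    ∀ j k, j ≠ k →
      (g k / g j) * (F j /
          ((η (x j - Complex.I * γ) - η (x k)) * (η (x j + Complex.I * γ) - η (x k))))
        = (g j / g k) * (F k /
          ((η (x k - Complex.I * γ) - η (x j)) * (η (x k + Complex.I * γ) - η (x j)))) :=
  symmetrized_matrix_offdiag_general n η hη γ x F g hg
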